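/- Fix integers N_A ≥ 1 and N_B ≥ 2 with N_B even, and set d_A = 2^{N_A}, d_B = 2^{N_B}. For every unit vector Ψ ∈ ℂ^{({0,1}^{N_A})} ⊗ ℂ^{({0,1}^{N_B})} and all ordered orthonormal bases β = (φ_1,…,φ_{d_A}) and γ = (η_1,…,η_{d_A}) of ℂ^{({0,1}^{N_A})}, the inequality |τ̄_β(Ψ) − τ̄_γ(Ψ)| ≤ √2 d_A d_B ‖β − γ‖_B holds. -/

import Mathlib

noncomputable section
open scoped BigOperators Classical ComplexConjugate ComplexOrder

/-- Vectors of an `n`-qubit system, as functions on bitstrings. -/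
abbrev QVec (n : ℕ) := (Fin n → Bool) → ℂ

/-- Vectors of a bipartite `(nA + nB)`-qubit system. -/
abbrev QState (nA nB : ℕ) := ((Fin nA → Bool) × (Fin nB → Bool)) → ℂ

/-- The standard inner product, conjugate-linear in the first argument. -/
def qInner {I : Type*} [Fintype I] (ψ φ : I → ℂ) : ℂ :=
  ∑ x, (starRingEnd ℂ) (ψ x) * φ x

/-- The Hilbert-space (Euclidean) norm. -/
def qNorm {I : Type*} [Fintype I] (ψ : I → ℂ) : ℝ :=
  Real.sqrt (qInner ψ ψ).re

/-- The Pauli matrix σ_y = [[0, -i], [i, 0]], indexed by `Bool`. -/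
def sigmaY : Bool → Bool → ℂ := fun x y =>
  if x = y then 0 else if x = false then -Complex.I else Complex.I

/-- The spin-flipped vector `ψ̃ = σ_y^{⊗n} ψ̄`. -/
def spinFlip {n : ℕ} (ψ : QVec n) : QVec n :=
  fun x => ∑ y, (∏ k, sigmaY (x k) (y k)) * (starRingEnd ℂ) (ψ y)

/-- The (unnormalized) post-measurement vector `P_v(Ψ)` on the `B` system. -/
def Pv {nA nB : ℕ} (v : QVec nA) (Ψ : QState nA nB) : QVec nB :=
  fun b => ∑ a, (starRingEnd ℂ) (v a) * Ψ (a, b)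

/-- `F_v(Ψ) = |⟨P_v(Ψ), P̃_v(Ψ)⟩|`. -/
def Fv {nA nB : ℕ} (v : QVec nA) (Ψ : QState nA nB) : ℝ :=
  ‖qInner (Pv v Ψ) (spinFlip (Pv v Ψ))‖

/-- The square root of a positive semidefinite matrix, as `Matrix.PosSemidef.sqrt` was defined
in the older Mathlib (that definition has since been removed). -/
def psdSqrt {I : Type*} [Fintype I] [DecidableEq I] {A : Matrix I I ℂ} (hA : A.PosSemidef) :
    Matrix I I ℂ :=
  (hA.1.eigenvectorUnitary : Matrix I I ℂ) *
    Matrix.diagonal (fun i => ((Real.sqrt (hA.1.eigenvalues i) : ℝ) : ℂ)) *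
    (star hA.1.eigenvectorUnitary : Matrix I I ℂ)

/-- The trace norm `‖M‖₁ = tr √(MᴴM)` of a complex square matrix. -/
def traceNorm {I : Type*} [Fintype I] [DecidableEq I] (M : Matrix I I ℂ) : ℝ :=
  ((psdSqrt (Matrix.posSemidef_conjTranspose_mul_self M)).trace).re

/-- The rank-one outer product `|u⟩⟨u| = u u†` of a vector. -/
def outerP {I : Type*} (u : I → ℂ) : Matrix I I ℂ :=
  Matrix.of fun i j => u i * (starRingEnd ℂ) (u j)

/-- `β` is an (ordered) orthonormal basis of `ℂ^{{0,1}^{nA}}`. -/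
def ONB {nA : ℕ} (β : (Fin nA → Bool) → QVec nA) : Prop :=
  ∀ i j, qInner (β i) (β j) = if i = j then 1 else 0

/-- The average post-measurement `n`-tangle `τ̄_β(Ψ) = ∑ᵢ F_{βᵢ}(Ψ)`. -/
def tauBar {nA nB : ℕ} (β : (Fin nA → Bool) → QVec nA) (Ψ : QState nA nB) : ℝ :=
  ∑ i, Fv (β i) Ψ

/-- The basis norm `‖β − γ‖_B = max_i ‖|βᵢ⟩⟨βᵢ| − |γᵢ⟩⟨γᵢ|‖₁` between two ordered
families of vectors with the same index set. -/
def basisNormP {I J : Type*} [Fintype J] [DecidableEq J] (β γ : I → (J → ℂ)) : ℝ :=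
  ⨆ i, traceNorm (outerP (β i) - outerP (γ i))

section PsdSqrtSec

lemma psdSqrt_mul_self {I : Type*} [Fintype I] [DecidableEq I] {A : Matrix I I ℂ}
    (hA : A.PosSemidef) : psdSqrt hA * psdSqrt hA = A := by
  set U : Matrix I I ℂ := (hA.1.eigenvectorUnitary : Matrix I I ℂ) with hUdef
  set D : Matrix I I ℂ := Matrix.diagonal (fun i => ((Real.sqrt (hA.1.eigenvalues i) : ℝ) : ℂ))
    with hDdef
  have hU : (star hA.1.eigenvectorUnitary : Matrix I I ℂ) * U = 1 :=
    Unitary.coe_star_mul_self _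
  have hD : D * D = Matrix.diagonal (RCLike.ofReal ∘ hA.1.eigenvalues) := by
    rw [hDdef, Matrix.diagonal_mul_diagonal]
    congr 1
    funext i
    simp only [Function.comp_apply]
    rw [← Complex.ofReal_mul, Real.mul_self_sqrt (hA.eigenvalues_nonneg i)]
    rfl
  conv_rhs => rw [hA.1.spectral_theorem, Unitary.conjStarAlgAut_apply]
  show U * D * (star hA.1.eigenvectorUnitary : Matrix I I ℂ) *
      (U * D * (star hA.1.eigenvectorUnitary : Matrix I I ℂ)) = _
  rw [show U * D * (star hA.1.eigenvectorUnitary : Matrix I I ℂ) *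
      (U * D * (star hA.1.eigenvectorUnitary : Matrix I I ℂ)) =
      U * (D * ((star hA.1.eigenvectorUnitary : Matrix I I ℂ) * U) * D) *
        (star hA.1.eigenvectorUnitary : Matrix I I ℂ) by simp only [Matrix.mul_assoc],
    hU, Matrix.mul_one, hD]

lemma psdSqrt_posSemidef {I : Type*} [Fintype I] [DecidableEq I] {A : Matrix I I ℂ}
    (hA : A.PosSemidef) : (psdSqrt hA).PosSemidef := by
  have hnn : (0 : I → ℂ) ≤ fun i => ((Real.sqrt (hA.1.eigenvalues i) : ℝ) : ℂ) :=
    fun i => Complex.zero_le_real.mpr (Real.sqrt_nonneg _)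
  have := (Matrix.PosSemidef.diagonal hnn).mul_mul_conjTranspose_same
    (hA.1.eigenvectorUnitary : Matrix I I ℂ)
  unfold psdSqrt
  rw [Matrix.star_eq_conjTranspose]
  exact this

end PsdSqrtSec

section Aux
variable {I : Type*} [Fintype I]

lemma qInner_eq_inner (ψ φ : I → ℂ) :
    qInner ψ φ = @inner ℂ (EuclideanSpace ℂ I) _ (WithLp.toLp 2 ψ) (WithLp.toLp 2 φ) := by
  simp [qInner, PiLp.inner_apply, RCLike.inner_apply, mul_comm]

lemma qNorm_eq_norm (ψ : I → ℂ) : qNorm ψ = @norm (EuclideanSpace ℂ I) _ (WithLp.toLp 2 ψ) := by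
  rw [qNorm, qInner_eq_inner, @norm_eq_sqrt_re_inner ℂ]
  rfl

lemma qNorm_nonneg (ψ : I → ℂ) : 0 ≤ qNorm ψ := Real.sqrt_nonneg _

lemma abs_qInner_le (ψ φ : I → ℂ) : ‖qInner ψ φ‖ ≤ qNorm ψ * qNorm φ := by
  rw [qInner_eq_inner, qNorm_eq_norm, qNorm_eq_norm]
  exact norm_inner_le_norm (𝕜 := ℂ) _ _

lemma qInner_self_re (ψ : I → ℂ) : (qInner ψ ψ).re = ∑ x, Complex.normSq (ψ x) := by
  simp [qInner, Complex.re_sum, Complex.mul_re, Complex.normSq_apply]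

lemma qNorm_sq (ψ : I → ℂ) : qNorm ψ ^ 2 = ∑ x, Complex.normSq (ψ x) := by
  rw [qNorm, Real.sq_sqrt, qInner_self_re]
  rw [qInner_self_re]
  exact Finset.sum_nonneg fun x _ => Complex.normSq_nonneg _

lemma qInner_conj_symm (ψ φ : I → ℂ) : qInner φ ψ = (starRingEnd ℂ) (qInner ψ φ) := by
  rw [qInner_eq_inner, qInner_eq_inner]
  exact (inner_conj_symm (𝕜 := ℂ) _ _).symm

lemma qInner_sub_left (ψ₁ ψ₂ φ : I → ℂ) :
    qInner (ψ₁ - ψ₂) φ = qInner ψ₁ φ - qInner ψ₂ φ := by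
  simp [qInner, sub_mul, Finset.sum_sub_distrib]

lemma qInner_sub_right (ψ φ₁ φ₂ : I → ℂ) :
    qInner ψ (φ₁ - φ₂) = qInner ψ φ₁ - qInner ψ φ₂ := by
  simp [qInner, mul_sub, Finset.sum_sub_distrib]

end Aux

section SpinFlip
variable {n : ℕ}

lemma sigmaY_not_normSq (b : Bool) : Complex.normSq (sigmaY b (!b)) = 1 := by
  cases b <;> simp [sigmaY]

lemma spinFlip_apply (ψ : QVec n) (x : Fin n → Bool) :
    spinFlip ψ x = (∏ k, sigmaY (x k) (!(x k))) * (starRingEnd ℂ) (ψ (fun k => !(x k))) := by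
  rw [spinFlip]
  apply Finset.sum_eq_single
  · intro y _ hy
    have : ∃ k, y k ≠ (!(x k)) := by
      by_contra h
      push_neg at h
      exact hy (funext h)
    obtain ⟨k, hk⟩ := this
    have hxk : x k = y k := by
      cases hx : x k <;> cases hyk : y k <;> simp_all
    have : sigmaY (x k) (y k) = 0 := by simp [sigmaY, hxk]
    rw [Finset.prod_eq_zero (Finset.mem_univ k) this, zero_mul]
  · intro h
    exact absurd (Finset.mem_univ _) h

lemma normSq_spinFlip (ψ : QVec n) (x : Fin n → Bool) :
    Complex.normSq (spinFlip ψ x) = Complex.normSq (ψ (fun k => !(x k))) := by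
  rw [spinFlip_apply, map_mul]
  have : Complex.normSq (∏ k, sigmaY (x k) (!(x k))) = 1 := by
    rw [map_prod]
    simp [sigmaY_not_normSq]
  rw [this, one_mul, Complex.normSq_conj]

lemma qNorm_spinFlip (ψ : QVec n) : qNorm (spinFlip ψ) = qNorm ψ := by
  have h2 : ∑ x, Complex.normSq (spinFlip ψ x) = ∑ x, Complex.normSq (ψ x) := by
    simp_rw [normSq_spinFlip]
    have inv : Function.Involutive (fun (x : Fin n → Bool) => (fun k => !(x k) : Fin n → Bool)) :=
      fun x => by funext k; simp
    exact Equiv.sum_comp inv.toPerm (fun x => Complex.normSq (ψ x))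
  rw [qNorm, qNorm, qInner_self_re, qInner_self_re, h2]

lemma spinFlip_sub (ψ φ : QVec n) : spinFlip (ψ - φ) = spinFlip ψ - spinFlip φ := by
  funext x
  simp [spinFlip, map_sub, mul_sub, Finset.sum_sub_distrib]

lemma spinFlip_smul (μ : ℂ) (ψ : QVec n) :
    spinFlip (fun y => μ * ψ y) = fun x => (starRingEnd ℂ) μ * spinFlip ψ x := by
  funext x
  simp only [spinFlip, map_mul, Finset.mul_sum]
  exact Finset.sum_congr rfl fun y _ => by ring

end SpinFlip

section PvSec
variable {nA nB : ℕ}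

lemma Pv_sub (u w : QVec nA) (Ψ : QState nA nB) :
    Pv (u - w) Ψ = Pv u Ψ - Pv w Ψ := by
  funext b
  simp [Pv, map_sub, sub_mul, Finset.sum_sub_distrib]

lemma Pv_smul (μ : ℂ) (v : QVec nA) (Ψ : QState nA nB) :
    Pv (fun a => μ * v a) Ψ = fun b => (starRingEnd ℂ) μ * Pv v Ψ b := by
  funext b
  simp [Pv, map_mul, Finset.mul_sum, mul_assoc]

lemma Pv_apply_eq_qInner (v : QVec nA) (Ψ : QState nA nB) (b : Fin nB → Bool) :
    Pv v Ψ b = qInner v (fun a => Ψ (a, b)) := rfl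

lemma qNorm_Pv_le (v : QVec nA) (Ψ : QState nA nB) :
    qNorm (Pv v Ψ) ≤ qNorm v * qNorm Ψ := by
  have key : ∀ b, Complex.normSq (Pv v Ψ b) ≤ qNorm v ^ 2 * ∑ a, Complex.normSq (Ψ (a, b)) := by
    intro b
    have h1 : Complex.normSq (Pv v Ψ b) = ‖qInner v (fun a => Ψ (a, b))‖ ^ 2 := by
      rw [Pv_apply_eq_qInner, Complex.sq_norm]
    rw [h1, ← qNorm_sq, ← mul_pow]
    have := abs_qInner_le v (fun a => Ψ (a, b))
    exact pow_le_pow_left₀ (norm_nonneg _) this 2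
  have hsum : qNorm (Pv v Ψ) ^ 2 ≤ (qNorm v * qNorm Ψ) ^ 2 := by
    rw [qNorm_sq]
    calc ∑ b, Complex.normSq (Pv v Ψ b)
        ≤ ∑ b, qNorm v ^ 2 * ∑ a, Complex.normSq (Ψ (a, b)) :=
          Finset.sum_le_sum fun b _ => key b
      _ = qNorm v ^ 2 * ∑ b, ∑ a, Complex.normSq (Ψ (a, b)) := by rw [Finset.mul_sum]
      _ = qNorm v ^ 2 * qNorm Ψ ^ 2 := by
          congr 1
          rw [qNorm_sq, Fintype.sum_prod_type]
          exact Finset.sum_comm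
      _ = (qNorm v * qNorm Ψ) ^ 2 := (mul_pow _ _ _).symm
  calc qNorm (Pv v Ψ) = Real.sqrt (qNorm (Pv v Ψ) ^ 2) := (Real.sqrt_sq (qNorm_nonneg _)).symm
    _ ≤ Real.sqrt ((qNorm v * qNorm Ψ) ^ 2) := Real.sqrt_le_sqrt hsum
    _ = qNorm v * qNorm Ψ := Real.sqrt_sq (mul_nonneg (qNorm_nonneg _) (qNorm_nonneg _))

lemma Fv_phase (μ : ℂ) (hμ : ‖μ‖ = 1) (v : QVec nA) (Ψ : QState nA nB) :
    Fv (fun a => μ * v a) Ψ = Fv v Ψ := by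
  rw [Fv, Fv, Pv_smul, spinFlip_smul]
  have h : qInner (fun b => (starRingEnd ℂ) μ * Pv v Ψ b)
      (fun x => (starRingEnd ℂ) ((starRingEnd ℂ) μ) * spinFlip (Pv v Ψ) x)
      = (μ * μ) * qInner (Pv v Ψ) (spinFlip (Pv v Ψ)) := by
    simp only [qInner, map_mul, Complex.conj_conj, Finset.mul_sum]
    exact Finset.sum_congr rfl fun b _ => by ring
  rw [h, norm_mul, norm_mul, hμ, one_mul, one_mul]

lemma Fv_diff_le (Ψ : QState nA nB) (hΨ : qNorm Ψ = 1) (u w : QVec nA)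
    (hu : qNorm u ≤ 1) (hw : qNorm w ≤ 1) :
    |Fv u Ψ - Fv w Ψ| ≤ 2 * qNorm (u - w) := by
  set P := Pv u Ψ with hP
  set Q := Pv w Ψ with hQ
  have h1 : |Fv u Ψ - Fv w Ψ| ≤
      ‖qInner P (spinFlip P) - qInner Q (spinFlip Q)‖ :=
    abs_norm_sub_norm_le _ _
  have hPQ : P - Q = Pv (u - w) Ψ := (Pv_sub u w Ψ).symm
  have hsplit : qInner P (spinFlip P) - qInner Q (spinFlip Q)
      = qInner (P - Q) (spinFlip P) + qInner Q (spinFlip (P - Q)) := by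
    rw [spinFlip_sub, qInner_sub_left, qInner_sub_right]
    ring
  have hPn : qNorm P ≤ 1 := by
    calc qNorm P ≤ qNorm u * qNorm Ψ := qNorm_Pv_le u Ψ
      _ ≤ 1 * 1 := by
          apply mul_le_mul hu (le_of_eq hΨ) (qNorm_nonneg _) zero_le_one
      _ = 1 := one_mul 1
  have hQn : qNorm Q ≤ 1 := by
    calc qNorm Q ≤ qNorm w * qNorm Ψ := qNorm_Pv_le w Ψ
      _ ≤ 1 * 1 := by
          apply mul_le_mul hw (le_of_eq hΨ) (qNorm_nonneg _) zero_le_one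
      _ = 1 := one_mul 1
  have hdn : qNorm (P - Q) ≤ qNorm (u - w) := by
    rw [hPQ]
    calc qNorm (Pv (u - w) Ψ) ≤ qNorm (u - w) * qNorm Ψ := qNorm_Pv_le _ _
      _ = qNorm (u - w) := by rw [hΨ, mul_one]
  have t1 : ‖qInner (P - Q) (spinFlip P)‖ ≤ qNorm (u - w) := by
    calc ‖qInner (P - Q) (spinFlip P)‖
        ≤ qNorm (P - Q) * qNorm (spinFlip P) := abs_qInner_le _ _
      _ = qNorm (P - Q) * qNorm P := by rw [qNorm_spinFlip]
      _ ≤ qNorm (u - w) * 1 := mul_le_mul hdn hPn (qNorm_nonneg _) (qNorm_nonneg _)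
      _ = qNorm (u - w) := mul_one _
  have t2 : ‖qInner Q (spinFlip (P - Q))‖ ≤ qNorm (u - w) := by
    calc ‖qInner Q (spinFlip (P - Q))‖
        ≤ qNorm Q * qNorm (spinFlip (P - Q)) := abs_qInner_le _ _
      _ = qNorm Q * qNorm (P - Q) := by rw [qNorm_spinFlip]
      _ ≤ 1 * qNorm (u - w) := mul_le_mul hQn hdn (qNorm_nonneg _) zero_le_one
      _ = qNorm (u - w) := one_mul _
  calc |Fv u Ψ - Fv w Ψ| ≤ ‖qInner P (spinFlip P) - qInner Q (spinFlip Q)‖ := h1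
    _ = ‖qInner (P - Q) (spinFlip P) + qInner Q (spinFlip (P - Q))‖ := by rw [hsplit]
    _ ≤ ‖qInner (P - Q) (spinFlip P)‖ + ‖qInner Q (spinFlip (P - Q))‖ :=
        norm_add_le _ _
    _ ≤ qNorm (u - w) + qNorm (u - w) := add_le_add t1 t2
    _ = 2 * qNorm (u - w) := (two_mul _).symm

end PvSec

section Phase
variable {nA nB : ℕ}

lemma qNorm_eq_one_of_qInner (u : QVec nA) (hu : qInner u u = 1) : qNorm u = 1 := by
  rw [qNorm, hu]
  simp

lemma Fv_pair_le (Ψ : QState nA nB) (hΨ : qNorm Ψ = 1) (u v : QVec nA)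
    (hu : qInner u u = 1) (hv : qInner v v = 1) :
    |Fv u Ψ - Fv v Ψ| ≤ 2 * Real.sqrt (2 - 2 * Complex.normSq (qInner u v)) := by
  set c : ℂ := qInner u v with hc
  have hnu : qNorm u = 1 := qNorm_eq_one_of_qInner u hu
  have hnv : qNorm v = 1 := qNorm_eq_one_of_qInner v hv
  have habs : ‖c‖ ≤ 1 := by
    have := abs_qInner_le u v
    rwa [hnu, hnv, one_mul] at this
  set μ : ℂ := if c = 0 then 1 else ((‖c‖ : ℝ) : ℂ) / c with hμdef
  have hμ : ‖μ‖ = 1 := by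
    by_cases h : c = 0
    · simp [hμdef, h]
    · rw [hμdef, if_neg h, norm_div, Complex.norm_real,
        Real.norm_of_nonneg (norm_nonneg c), div_self (norm_ne_zero_iff.mpr h)]
  set w : QVec nA := fun a => μ * v a with hwdef
  have huw : qInner u w = ((‖c‖ : ℝ) : ℂ) := by
    have h1 : qInner u w = μ * c := by
      rw [hc, qInner, qInner, Finset.mul_sum]
      exact Finset.sum_congr rfl fun a _ => by rw [hwdef]; ring
    rw [h1]
    by_cases h : c = 0
    · simp [hμdef, h]
    · rw [hμdef, if_neg h, div_mul_cancel₀ _ h]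
  have hww : qInner w w = 1 := by
    have h1 : qInner w w = ((starRingEnd ℂ) μ * μ) * qInner v v := by
      rw [qInner, qInner, Finset.mul_sum]
      exact Finset.sum_congr rfl fun a _ => by rw [hwdef]; simp [map_mul]; ring
    rw [h1, hv, mul_one, ← Complex.normSq_eq_conj_mul_self, ← Complex.sq_norm, hμ]
    norm_num
  have hnw : qNorm w = 1 := qNorm_eq_one_of_qInner w hww
  have hdiff : qNorm (u - w) = Real.sqrt (2 - 2 * ‖c‖) := by
    have hexp : qInner (u - w) (u - w) = ((2 : ℂ) - 2 * ((‖c‖ : ℝ) : ℂ)) := by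
      rw [qInner_sub_left, qInner_sub_right, qInner_sub_right,
        qInner_conj_symm u w, huw, hu, hww]
      simp [Complex.conj_ofReal]
      ring
    rw [qNorm, hexp]
    congr 1
    simp
  have hphase : Fv w Ψ = Fv v Ψ := Fv_phase μ hμ v Ψ
  have hmain : |Fv u Ψ - Fv w Ψ| ≤ 2 * Real.sqrt (2 - 2 * ‖c‖) := by
    rw [← hdiff]
    exact Fv_diff_le Ψ hΨ u w (le_of_eq hnu) (le_of_eq hnw)
  rw [← hphase]
  refine hmain.trans ?_
  have hsq : 2 - 2 * ‖c‖ ≤ 2 - 2 * Complex.normSq c := by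
    have : Complex.normSq c ≤ ‖c‖ := by
      rw [← Complex.sq_norm, sq]
      calc ‖c‖ * ‖c‖ ≤ 1 * ‖c‖ :=
        mul_le_mul_of_nonneg_right habs (norm_nonneg _)
        _ = ‖c‖ := one_mul _
    linarith
  have := Real.sqrt_le_sqrt hsq
  linarith

end Phase

section TraceNormSec
variable {I : Type*} [Fintype I] [DecidableEq I]

lemma psd_entry_eq_qInner {S : Matrix I I ℂ} (hS : S.PosSemidef) :
    ∃ B : Matrix I I ℂ, ∀ i j, S i j = qInner (fun k => B k i) (fun k => B k j) := by
  obtain ⟨B, rfl⟩ : ∃ B : Matrix I I ℂ, S = B.conjTranspose * B :=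
    ⟨psdSqrt hS, by rw [(psdSqrt_posSemidef hS).1.eq, psdSqrt_mul_self]⟩
  exact ⟨B, fun i j => by simp [Matrix.mul_apply, Matrix.conjTranspose_apply, qInner]⟩

lemma psd_diag_re_nonneg {S : Matrix I I ℂ} (hS : S.PosSemidef) (i : I) :
    0 ≤ (S i i).re := by
  obtain ⟨B, hB⟩ := psd_entry_eq_qInner hS
  rw [hB, qInner_self_re]
  exact Finset.sum_nonneg fun k _ => Complex.normSq_nonneg _

lemma psd_normSq_entry_le {S : Matrix I I ℂ} (hS : S.PosSemidef) (i j : I) :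
    Complex.normSq (S i j) ≤ (S i i).re * (S j j).re := by
  obtain ⟨B, hB⟩ := psd_entry_eq_qInner hS
  have h1 : ‖S i j‖ ≤ qNorm (fun k => B k i) * qNorm (fun k => B k j) := by
    rw [hB]
    exact abs_qInner_le _ _
  have h2 : (S i i).re = qNorm (fun k => B k i) ^ 2 := by
    rw [hB, qInner_self_re, qNorm_sq]
  have h3 : (S j j).re = qNorm (fun k => B k j) ^ 2 := by
    rw [hB, qInner_self_re, qNorm_sq]
  rw [← Complex.sq_norm, h2, h3, ← mul_pow]
  exact pow_le_pow_left₀ (norm_nonneg _) h1 2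

lemma psd_trace_sq_le {S : Matrix I I ℂ} (hS : S.PosSemidef) :
    ((S * S).trace).re ≤ ((S.trace).re) ^ 2 := by
  have herm : ∀ i j, S j i = (starRingEnd ℂ) (S i j) := by
    intro i j
    have h := congrFun (congrFun hS.isHermitian j) i
    rw [Matrix.conjTranspose_apply] at h
    exact h.symm
  have h1 : ((S * S).trace).re = ∑ i, ∑ j, Complex.normSq (S i j) := by
    rw [Matrix.trace, Complex.re_sum]
    refine Finset.sum_congr rfl fun i _ => ?_
    rw [Matrix.diag_apply, Matrix.mul_apply, Complex.re_sum]
    refine Finset.sum_congr rfl fun j _ => ?_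
    rw [herm i j, Complex.mul_conj]
    simp
  have h2 : ((S.trace).re) ^ 2 = ∑ i, ∑ j, (S i i).re * (S j j).re := by
    rw [Matrix.trace, Complex.re_sum, sq, Finset.sum_mul_sum]
    rfl
  rw [h1, h2]
  exact Finset.sum_le_sum fun i _ => Finset.sum_le_sum fun j _ => psd_normSq_entry_le hS i j

lemma traceNorm_nonneg (M : Matrix I I ℂ) : 0 ≤ traceNorm M := by
  rw [traceNorm, Matrix.trace, Complex.re_sum]
  exact Finset.sum_nonneg fun i _ =>
    psd_diag_re_nonneg (psdSqrt_posSemidef (Matrix.posSemidef_conjTranspose_mul_self M)) i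

lemma le_traceNorm_sq (M : Matrix I I ℂ) :
    ((M.conjTranspose * M).trace).re ≤ traceNorm M ^ 2 := by
  have hA := Matrix.posSemidef_conjTranspose_mul_self M
  have hS := psdSqrt_posSemidef hA
  have hsq : psdSqrt hA * psdSqrt hA = M.conjTranspose * M := psdSqrt_mul_self hA
  calc ((M.conjTranspose * M).trace).re = ((psdSqrt hA * psdSqrt hA).trace).re := by rw [hsq]
    _ ≤ (((psdSqrt hA).trace).re) ^ 2 := psd_trace_sq_le hS
    _ = traceNorm M ^ 2 := rfl

lemma trace_conjTranspose_mul_self_re (M : Matrix I I ℂ) :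
    ((M.conjTranspose * M).trace).re = ∑ j, ∑ i, Complex.normSq (M i j) := by
  rw [Matrix.trace, Complex.re_sum]
  refine Finset.sum_congr rfl fun j _ => ?_
  rw [Matrix.diag_apply, Matrix.mul_apply, Complex.re_sum]
  refine Finset.sum_congr rfl fun i _ => ?_
  rw [Matrix.conjTranspose_apply]
  simp [Complex.normSq_apply]

end TraceNormSec

section OuterSec
variable {I : Type*} [Fintype I] [DecidableEq I]

lemma sqrt_le_traceNorm_outer (u v : I → ℂ) (hu : qInner u u = 1) (hv : qInner v v = 1) :
    Real.sqrt (2 - 2 * Complex.normSq (qInner u v)) ≤ traceNorm (outerP u - outerP v) := by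
  set M : Matrix I I ℂ := outerP u - outerP v with hM
  have expand : ∀ j i : I, (starRingEnd ℂ) (M i j) * M i j =
      ((starRingEnd ℂ) (u j) * u j) * ((starRingEnd ℂ) (u i) * u i)
    + ((starRingEnd ℂ) (v j) * v j) * ((starRingEnd ℂ) (v i) * v i)
    - ((starRingEnd ℂ) (u j) * v j) * ((starRingEnd ℂ) (v i) * u i)
    - ((starRingEnd ℂ) (v j) * u j) * ((starRingEnd ℂ) (u i) * v i) := by
    intro j i
    simp only [hM, Matrix.sub_apply, outerP, Matrix.of_apply, map_sub, map_mul,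
      Complex.conj_conj]
    ring
  have keyC : ∑ j, ∑ i, ((starRingEnd ℂ) (M i j) * M i j)
      = 2 - 2 * ((Complex.normSq (qInner u v) : ℝ) : ℂ) := by
    calc ∑ j, ∑ i, ((starRingEnd ℂ) (M i j) * M i j)
        = ∑ j, ∑ i, (((starRingEnd ℂ) (u j) * u j) * ((starRingEnd ℂ) (u i) * u i)
          + ((starRingEnd ℂ) (v j) * v j) * ((starRingEnd ℂ) (v i) * v i)
          - ((starRingEnd ℂ) (u j) * v j) * ((starRingEnd ℂ) (v i) * u i)
          - ((starRingEnd ℂ) (v j) * u j) * ((starRingEnd ℂ) (u i) * v i)) :=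
          Finset.sum_congr rfl fun j _ => Finset.sum_congr rfl fun i _ => expand j i
      _ = qInner u u * qInner u u + qInner v v * qInner v v
          - qInner u v * qInner v u - qInner v u * qInner u v := by
          simp only [Finset.sum_sub_distrib, Finset.sum_add_distrib, ← Finset.sum_mul_sum]
          rfl
      _ = 2 - 2 * ((Complex.normSq (qInner u v) : ℝ) : ℂ) := by
          rw [hu, hv, qInner_conj_symm u v, Complex.mul_conj, ← Complex.normSq_eq_conj_mul_self]
          ring
  have h1 : ((M.conjTranspose * M).trace).re = 2 - 2 * Complex.normSq (qInner u v) := by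
    rw [trace_conjTranspose_mul_self_re]
    calc ∑ j, ∑ i, Complex.normSq (M i j)
        = (∑ j, ∑ i, ((starRingEnd ℂ) (M i j) * M i j)).re := by
          simp [Complex.re_sum, ← Complex.normSq_eq_conj_mul_self]
      _ = 2 - 2 * Complex.normSq (qInner u v) := by rw [keyC]; simp
  have h2 : 2 - 2 * Complex.normSq (qInner u v) ≤ traceNorm M ^ 2 := by
    rw [← h1]
    exact le_traceNorm_sq M
  calc Real.sqrt (2 - 2 * Complex.normSq (qInner u v))
      ≤ Real.sqrt (traceNorm M ^ 2) := Real.sqrt_le_sqrt h2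
    _ = traceNorm M := Real.sqrt_sq (traceNorm_nonneg M)

end OuterSec

theorem tauBar_lipschitz_in_basis
    (NA NB : ℕ) (hNA : 1 ≤ NA) (hNB : 2 ≤ NB) (hNBeven : Even NB)
    (dA dB : ℕ) (hdA : dA = 2 ^ NA) (hdB : dB = 2 ^ NB)
    (Ψ : QState NA NB) (hΨ : qNorm Ψ = 1)
    (β γ : (Fin NA → Bool) → QVec NA) (hβ : ONB β) (hγ : ONB γ) :
    |tauBar β Ψ - tauBar γ Ψ| ≤ Real.sqrt 2 * dA * dB * basisNormP β γ := by
  have hbn_each : ∀ i, traceNorm (outerP (β i) - outerP (γ i)) ≤ basisNormP β γ := by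
    intro i
    rw [basisNormP]
    exact le_ciSup (Finite.bddAbove_range fun k => traceNorm (outerP (β k) - outerP (γ k))) i
  have hbn_nonneg : 0 ≤ basisNormP β γ :=
    (traceNorm_nonneg _).trans (hbn_each (fun _ => false))
  have per : ∀ i, |Fv (β i) Ψ - Fv (γ i) Ψ| ≤ 2 * basisNormP β γ := by
    intro i
    have hββ : qInner (β i) (β i) = 1 := by simpa using hβ i i
    have hγγ : qInner (γ i) (γ i) = 1 := by simpa using hγ i i
    have h1 := Fv_pair_le Ψ hΨ (β i) (γ i) hββ hγγ
    have h2 := sqrt_le_traceNorm_outer (β i) (γ i) hββ hγγ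
    have h3 := hbn_each i
    linarith
  have hcard : (Fintype.card (Fin NA → Bool) : ℝ) = (dA : ℝ) := by
    rw [hdA]
    simp [Fintype.card_fun]
  have hdB4 : (4 : ℝ) ≤ (dB : ℝ) := by
    rw [hdB]
    have : (2 : ℕ) ^ 2 ≤ 2 ^ NB := Nat.pow_le_pow_right (by norm_num) hNB
    exact_mod_cast this
  have hs2 : 1 ≤ Real.sqrt 2 := by
    rw [show (1 : ℝ) = Real.sqrt 1 by simp]
    exact Real.sqrt_le_sqrt one_le_two
  have hdA0 : (0 : ℝ) ≤ (dA : ℝ) := Nat.cast_nonneg _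
  calc |tauBar β Ψ - tauBar γ Ψ|
      = |∑ i, (Fv (β i) Ψ - Fv (γ i) Ψ)| := by
        rw [tauBar, tauBar, Finset.sum_sub_distrib]
    _ ≤ ∑ i, |Fv (β i) Ψ - Fv (γ i) Ψ| := Finset.abs_sum_le_sum_abs _ _
    _ ≤ ∑ _i : Fin NA → Bool, 2 * basisNormP β γ := Finset.sum_le_sum fun i _ => per i
    _ = (Fintype.card (Fin NA → Bool) : ℝ) * (2 * basisNormP β γ) := by
        rw [Finset.sum_const, nsmul_eq_mul, Finset.card_univ]
    _ = (dA : ℝ) * (2 * basisNormP β γ) := by rw [hcard]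
    _ ≤ Real.sqrt 2 * dA * dB * basisNormP β γ := by
        nlinarith [mul_nonneg hdA0 hbn_nonneg, mul_nonneg (mul_nonneg hdA0 hbn_nonneg) (le_trans (by norm_num) hdB4)]
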